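/- Let E : ℝ^D → ℝ be smooth and θ₀ ∈ ℝ^D. Then there exist C > 0 and h₀ > 0 such that for every h ∈ (0, h₀) and every solution φ : [0, h] → ℝ^D of the initial-condition-dependent flow φ′(t) = −∇E(φ(t)) − (h/2) ∇²E(φ(t))[∇E(θ₀)] with φ(0) = θ₀, one has ‖φ(h) − (θ₀ − h∇E(θ₀))‖ ≤ C h³; i.e. this flow, whose first-order correction freezes the gradient at the initial parameters θ₀, also follows one gradient descent step with error of order O(h³). -/

import Mathlib

open Set Metric

set_option maxHeartbeats 1000000 in
/-- One gradient descent step follows the initial-condition-dependent flow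
`φ' = −∇E(φ) − (h/2) ∇²E(φ)[∇E(θ₀)]` (gradient frozen at `θ₀`) with error `O(h³)`. -/
theorem gd_follows_frozen_gradient_flow {D : ℕ}
    (E : EuclideanSpace ℝ (Fin D) → ℝ) (hE : ContDiff ℝ (⊤ : ℕ∞) E)
    (θ₀ : EuclideanSpace ℝ (Fin D)) :
    ∃ C > (0 : ℝ), ∃ h₀ > (0 : ℝ), ∀ h ∈ Set.Ioo (0 : ℝ) h₀,
      ∀ φ : ℝ → EuclideanSpace ℝ (Fin D),
        φ 0 = θ₀ →
        (∀ t ∈ Set.Icc (0 : ℝ) h,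
          HasDerivAt φ
            (-(gradient E (φ t))
              - (h / 2) • fderiv ℝ (gradient E) (φ t) (gradient E θ₀)) t) →
        ‖φ h - (θ₀ - h • gradient E θ₀)‖ ≤ C * h ^ 3 := by
  have hG : ContDiff ℝ (⊤ : ℕ∞) (gradient E) :=
    (InnerProductSpace.toDual ℝ (EuclideanSpace ℝ (Fin D))).symm.contDiff.comp
      (hE.fderiv_right (by simp))
  have hA : ContDiff ℝ (⊤ : ℕ∞) (fderiv ℝ (gradient E)) := hG.fderiv_right (by simp)
  have hA2 : ContDiff ℝ (⊤ : ℕ∞) (fderiv ℝ (fderiv ℝ (gradient E))) := hA.fderiv_right (by simp)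
  have hGd : Differentiable ℝ (gradient E) := hG.differentiable (by simp)
  have hAd : Differentiable ℝ (fderiv ℝ (gradient E)) := hA.differentiable (by simp)
  obtain ⟨m₁, hm₁⟩ := (isCompact_closedBall θ₀ 1).exists_bound_of_continuousOn
    hG.continuous.continuousOn
  obtain ⟨m₂, hm₂⟩ := (isCompact_closedBall θ₀ 1).exists_bound_of_continuousOn
    hA.continuous.continuousOn
  obtain ⟨m₃, hm₃⟩ := (isCompact_closedBall θ₀ 1).exists_bound_of_continuousOn
    (f := fderiv ℝ (fderiv ℝ (gradient E))) hA2.continuous.continuousOn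
  set M₁ : ℝ := max m₁ 1 with hM₁def
  set M₂ : ℝ := max m₂ 1 with hM₂def
  set M₃ : ℝ := max m₃ 1 with hM₃def
  have hM₁1 : (1:ℝ) ≤ M₁ := le_max_right _ _
  have hM₂1 : (1:ℝ) ≤ M₂ := le_max_right _ _
  have hM₃1 : (1:ℝ) ≤ M₃ := le_max_right _ _
  have hbG : ∀ x ∈ closedBall θ₀ 1, ‖gradient E x‖ ≤ M₁ :=
    fun x hx => (hm₁ x hx).trans (le_max_left _ _)
  have hbA : ∀ x ∈ closedBall θ₀ 1, ‖fderiv ℝ (gradient E) x‖ ≤ M₂ :=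
    fun x hx => (hm₂ x hx).trans (le_max_left _ _)
  have hbA' : ∀ x ∈ closedBall θ₀ 1, ‖fderiv ℝ (fderiv ℝ (gradient E)) x‖ ≤ M₃ :=
    fun x hx => (hm₃ x hx).trans (le_max_left _ _)
  set M : ℝ := M₁ + M₂ * M₁ with hMdef
  have hMpos : (0:ℝ) < M := by nlinarith
  have hθ₀mem : θ₀ ∈ closedBall θ₀ 1 := mem_closedBall_self zero_le_one
  -- Lipschitz estimates on the unit ball
  have hGlip : ∀ x ∈ closedBall θ₀ 1, ∀ y ∈ closedBall θ₀ 1,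
      ‖gradient E x - gradient E y‖ ≤ M₂ * ‖x - y‖ := fun x hx y hy =>
    (convex_closedBall θ₀ 1).norm_image_sub_le_of_norm_fderiv_le
      (fun z _ => hGd z) hbA hy hx
  have hAlip : ∀ x ∈ closedBall θ₀ 1, ∀ y ∈ closedBall θ₀ 1,
      ‖fderiv ℝ (gradient E) x - fderiv ℝ (gradient E) y‖ ≤ M₃ * ‖x - y‖ := fun x hx y hy =>
    (convex_closedBall θ₀ 1).norm_image_sub_le_of_norm_fderiv_le
      (fun z _ => hAd z) hbA' hy hx
  have hv₀ : ‖gradient E θ₀‖ ≤ M₁ := hbG θ₀ hθ₀mem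
  have hM₃pos : (0:ℝ) < M₃ := by linarith
  have hM₂pos : (0:ℝ) < M₂ := by linarith
  have hM₁pos : (0:ℝ) < M₁ := by linarith
  have hCpos : (0:ℝ) < M₃*M*M + M₂*(M₂*M + M₂*M₁) + M₃*M*M₁ := by positivity
  refine ⟨M₃*M*M + M₂*(M₂*M + M₂*M₁) + M₃*M*M₁, hCpos, min 1 M⁻¹,
    lt_min one_pos (inv_pos.2 hMpos), ?_⟩
  rintro h ⟨hh0, hhlt⟩ φ hφ0 hφ'
  have hh1 : h < 1 := hhlt.trans_le (min_le_left _ _)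
  have hMh : M * h < 1 := by
    have : h < M⁻¹ := hhlt.trans_le (min_le_right _ _)
    calc M * h < M * M⁻¹ := by exact (mul_lt_mul_iff_right₀ hMpos).2 this
    _ = 1 := mul_inv_cancel₀ hMpos.ne'
  have hMh0 : 0 ≤ M * h := by positivity
  -- the prescribed derivative
  set P : ℝ → EuclideanSpace ℝ (Fin D) := fun t =>
    -(gradient E (φ t)) - (h / 2) • fderiv ℝ (gradient E) (φ t) (gradient E θ₀) with hPdef
  -- derivative bound whenever φ t is in the unit ball
  have hPbound : ∀ t, φ t ∈ closedBall θ₀ 1 → ‖P t‖ ≤ M := by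
    intro t ht
    have h1 : ‖gradient E (φ t)‖ ≤ M₁ := hbG _ ht
    have h2 : ‖fderiv ℝ (gradient E) (φ t) (gradient E θ₀)‖ ≤ M₂ * M₁ :=
      le_trans ((fderiv ℝ (gradient E) (φ t)).le_opNorm _)
        (mul_le_mul (hbA _ ht) hv₀ (norm_nonneg _) ((norm_nonneg _).trans (hbA _ ht)))
    calc ‖P t‖ ≤ ‖gradient E (φ t)‖ + ‖(h / 2) • fderiv ℝ (gradient E) (φ t) (gradient E θ₀)‖ := by
          rw [hPdef]; exact (norm_sub_le _ _).trans (by rw [norm_neg])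
      _ = ‖gradient E (φ t)‖ + (h/2) * ‖fderiv ℝ (gradient E) (φ t) (gradient E θ₀)‖ := by
          rw [norm_smul, Real.norm_eq_abs, abs_of_nonneg (by linarith)]
      _ ≤ M₁ + (h/2) * (M₂ * M₁) := by
          have : (0:ℝ) ≤ h/2 := by linarith
          gcongr
      _ ≤ M₁ + M₂ * M₁ := by nlinarith

  -- continuity of the trajectory on [0, h]
  have hφc : ContinuousOn φ (Icc 0 h) := fun t ht =>
    ((hφ' t ht).continuousAt).continuousWithinAt
  have hucont : ContinuousOn (fun t => ‖φ t - θ₀‖) (Icc 0 h) :=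
    (hφc.sub continuousOn_const).norm
  -- Step 1: the trajectory stays in the unit ball
  have htraj : ∀ t ∈ Icc (0:ℝ) h, ‖φ t - θ₀‖ ≤ 1 := by
    by_contra hcon
    push_neg at hcon
    obtain ⟨t₁, ht₁, ht₁'⟩ := hcon
    set S : Set ℝ := Icc 0 h ∩ (fun t => ‖φ t - θ₀‖) ⁻¹' Ici 1 with hSdef
    have hSclosed : IsClosed S := hucont.preimage_isClosed_of_isClosed isClosed_Icc isClosed_Ici
    have hSne : S.Nonempty := ⟨t₁, ht₁, le_of_lt ht₁'⟩
    have hSbdd : BddBelow S := ⟨0, fun x hx => hx.1.1⟩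
    set T := sInf S with hTdef
    have hTS : T ∈ S := hSclosed.csInf_mem hSne hSbdd
    have hT1 : 1 ≤ ‖φ T - θ₀‖ := hTS.2
    have hTmem : T ∈ Icc (0:ℝ) h := hTS.1
    have hu0 : ‖φ 0 - θ₀‖ = 0 := by rw [hφ0, sub_self, norm_zero]
    have hT0 : 0 < T := by
      rcases lt_or_eq_of_le hTmem.1 with H | H
      · exact H
      · exfalso; rw [← H, hu0] at hT1; linarith
    have hlt : ∀ s ∈ Ico (0:ℝ) T, ‖φ s - θ₀‖ ≤ 1 := by
      intro s hs
      by_contra hb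
      push_neg at hb
      have hsS : s ∈ S := ⟨⟨hs.1, le_trans hs.2.le hTmem.2⟩, le_of_lt hb⟩
      exact absurd (csInf_le hSbdd hsS) (not_le.2 hs.2)
    have hball : ∀ s ∈ Icc (0:ℝ) T, ‖φ s - θ₀‖ ≤ 1 := by
      have hclosed2 : IsClosed (Icc 0 h ∩ (fun t => ‖φ t - θ₀‖) ⁻¹' Iic 1) :=
        hucont.preimage_isClosed_of_isClosed isClosed_Icc isClosed_Iic
      have hsub : Ico (0:ℝ) T ⊆ Icc 0 h ∩ (fun t => ‖φ t - θ₀‖) ⁻¹' Iic 1 := fun s hs =>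
        ⟨⟨hs.1, hs.2.le.trans hTmem.2⟩, hlt s hs⟩
      have hsubcl : Icc (0:ℝ) T ⊆ Icc 0 h ∩ (fun t => ‖φ t - θ₀‖) ⁻¹' Iic 1 := by
        rw [← closure_Ico hT0.ne]
        exact hclosed2.closure_subset_iff.2 hsub
      intro s hs; exact (hsubcl hs).2
    have hmvt := norm_image_sub_le_of_norm_deriv_le_segment'
      (f := φ) (f' := P) (a := 0) (b := T) (C := M)
      (fun x hx => ((hφ' x ⟨hx.1, hx.2.trans hTmem.2⟩).hasDerivWithinAt))
      (fun x hx => hPbound x (mem_closedBall_iff_norm.2 (hball x ⟨hx.1, hx.2.le⟩)))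
    have h1 := hmvt T (right_mem_Icc.2 hTmem.1)
    rw [hφ0, sub_zero] at h1
    have h2 : M * T ≤ M * h := mul_le_mul_of_nonneg_left hTmem.2 hMpos.le
    linarith
  have hmem : ∀ t ∈ Icc (0:ℝ) h, φ t ∈ closedBall θ₀ 1 :=
    fun t ht => mem_closedBall_iff_norm.2 (htraj t ht)
  have hderivIcc : ∀ x ∈ Icc (0:ℝ) h, HasDerivWithinAt φ (P x) (Icc 0 h) x :=
    fun x hx => (hφ' x hx).hasDerivWithinAt
  -- Step 2: linear a priori bound
  have hMt : ∀ t ∈ Icc (0:ℝ) h, ‖φ t - θ₀‖ ≤ M * t := by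
    intro t ht
    have := norm_image_sub_le_of_norm_deriv_le_segment' hderivIcc
      (fun x hx => hPbound x (hmem x (Ico_subset_Icc_self hx))) t ht
    rwa [hφ0, sub_zero] at this
  have hMh' : ∀ t ∈ Icc (0:ℝ) h, ‖φ t - θ₀‖ ≤ M * h :=
    fun t ht => (hMt t ht).trans (mul_le_mul_of_nonneg_left ht.2 hMpos.le)
  -- Step 3: second-order bound on φ t - θ₀ + t • v₀
  have hρderiv : ∀ x ∈ Icc (0:ℝ) h,
      HasDerivWithinAt (fun t => φ t - θ₀ + t • gradient E θ₀)
        (P x + gradient E θ₀) (Icc 0 h) x := by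
    intro x hx
    have h1 : HasDerivAt (fun t : ℝ => t • gradient E θ₀) (gradient E θ₀) x := by
      simpa using (hasDerivAt_id x).smul_const (gradient E θ₀)
    exact (((hφ' x hx).sub_const θ₀).add h1).hasDerivWithinAt
  have hρbound : ∀ t ∈ Icc (0:ℝ) h,
      ‖φ t - θ₀ + t • gradient E θ₀‖ ≤ (M₂*M + M₂*M₁) * h * h := by
    intro t ht
    have key : ∀ x ∈ Ico (0:ℝ) h, ‖P x + gradient E θ₀‖ ≤ (M₂*M + M₂*M₁) * h := by
      intro x hx
      have hxI : x ∈ Icc (0:ℝ) h := Ico_subset_Icc_self hx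
      have hmx := hmem x hxI
      have h1 : ‖gradient E θ₀ - gradient E (φ x)‖ ≤ M₂ * (M*h) := by
        calc ‖gradient E θ₀ - gradient E (φ x)‖ ≤ M₂ * ‖θ₀ - φ x‖ :=
              hGlip θ₀ hθ₀mem (φ x) hmx
          _ = M₂ * ‖φ x - θ₀‖ := by rw [norm_sub_rev]
          _ ≤ M₂ * (M * h) := mul_le_mul_of_nonneg_left (hMh' x hxI) (by linarith)
      have h2 : ‖(h/2) • fderiv ℝ (gradient E) (φ x) (gradient E θ₀)‖ ≤ (h/2) * (M₂ * M₁) := by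
        rw [norm_smul, Real.norm_eq_abs, abs_of_nonneg (by linarith)]
        refine mul_le_mul_of_nonneg_left ?_ (by linarith)
        exact le_trans ((fderiv ℝ (gradient E) (φ x)).le_opNorm _)
          (mul_le_mul (hbA _ hmx) hv₀ (norm_nonneg _) ((norm_nonneg _).trans (hbA _ hmx)))
      have heq : P x + gradient E θ₀ = (gradient E θ₀ - gradient E (φ x))
          - (h/2) • fderiv ℝ (gradient E) (φ x) (gradient E θ₀) := by
        rw [hPdef]; beta_reduce; module
      rw [heq]
      calc ‖_ - _‖ ≤ ‖gradient E θ₀ - gradient E (φ x)‖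
            + ‖(h/2) • fderiv ℝ (gradient E) (φ x) (gradient E θ₀)‖ := norm_sub_le _ _
        _ ≤ M₂ * (M*h) + (h/2) * (M₂ * M₁) := add_le_add h1 h2
        _ ≤ (M₂*M + M₂*M₁) * h := by
            nlinarith [mul_nonneg (mul_nonneg hM₂pos.le hM₁pos.le) hh0.le]
    have hmvt := norm_image_sub_le_of_norm_deriv_le_segment'
      (f := fun t => φ t - θ₀ + t • gradient E θ₀) (f' := fun x => P x + gradient E θ₀)
      hρderiv key t ht
    have h0 : φ (0:ℝ) - θ₀ + (0:ℝ) • gradient E θ₀ = 0 := by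
      rw [hφ0, sub_self, zero_smul, add_zero]
    simp only [h0, sub_zero] at hmvt
    calc ‖φ t - θ₀ + t • gradient E θ₀‖ ≤ (M₂*M + M₂*M₁) * h * t := hmvt
      _ ≤ (M₂*M + M₂*M₁) * h * h := by
          refine mul_le_mul_of_nonneg_left ht.2 ?_
          nlinarith [mul_pos (mul_pos hM₂pos hMpos) hh0, mul_pos (mul_pos hM₂pos hM₁pos) hh0]
  -- Step 4: Taylor estimate for the gradient
  have hTaylor : ∀ t ∈ Icc (0:ℝ) h,
      ‖gradient E (φ t) - gradient E θ₀ - fderiv ℝ (gradient E) θ₀ (φ t - θ₀)‖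
        ≤ (M₃*(M*h)) * (M*h) := by
    intro t ht
    have hsubB : closedBall θ₀ (M*h) ⊆ closedBall θ₀ 1 := closedBall_subset_closedBall hMh.le
    have hbound : ∀ z ∈ closedBall θ₀ (M*h),
        ‖fderiv ℝ (gradient E) z - fderiv ℝ (gradient E) θ₀‖ ≤ M₃*(M*h) := by
      intro z hz
      calc ‖fderiv ℝ (gradient E) z - fderiv ℝ (gradient E) θ₀‖ ≤ M₃ * ‖z - θ₀‖ :=
            hAlip z (hsubB hz) θ₀ hθ₀mem
        _ ≤ M₃*(M*h) :=
            mul_le_mul_of_nonneg_left (mem_closedBall_iff_norm.1 hz) (by linarith)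
    have hy : φ t ∈ closedBall θ₀ (M*h) := mem_closedBall_iff_norm.2 (hMh' t ht)
    have hx : θ₀ ∈ closedBall θ₀ (M*h) := mem_closedBall_self hMh0
    have := (convex_closedBall θ₀ (M*h)).norm_image_sub_le_of_norm_fderiv_le'
      (fun z _ => hGd z) hbound hx hy
    exact this.trans (mul_le_mul_of_nonneg_left (hMh' t ht) (by positivity))
  -- Step 5: compare with the explicit curve
  have hψderiv : ∀ x ∈ Icc (0:ℝ) h,
      HasDerivWithinAt
        (fun t => φ t - (θ₀ - t • gradient E θ₀
          - ((t*(h-t))/2) • fderiv ℝ (gradient E) θ₀ (gradient E θ₀)))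
        (P x - (-(gradient E θ₀)
          - ((h - 2*x)/2) • fderiv ℝ (gradient E) θ₀ (gradient E θ₀))) (Icc 0 h) x := by
    intro x hx
    have h1 : HasDerivAt (fun t : ℝ => t • gradient E θ₀) (gradient E θ₀) x := by
      simpa using (hasDerivAt_id x).smul_const (gradient E θ₀)
    have hq : HasDerivAt (fun t : ℝ => (t*(h-t))/2) ((h - 2*x)/2) x := by
      have h2 : HasDerivAt (fun t : ℝ => t*(h-t)) (h - 2*x) x := by
        have := (hasDerivAt_id' x).mul ((hasDerivAt_const x h).sub (hasDerivAt_id' x))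
        exact this.congr_deriv (by simp only [Pi.sub_apply]; ring)
      simpa using h2.div_const 2
    have hc : HasDerivAt
        (fun t => θ₀ - t • gradient E θ₀
          - ((t*(h-t))/2) • fderiv ℝ (gradient E) θ₀ (gradient E θ₀))
        (-(gradient E θ₀) - ((h - 2*x)/2) • fderiv ℝ (gradient E) θ₀ (gradient E θ₀)) x := by
      have := ((hasDerivAt_const x θ₀).sub h1).sub
        (hq.smul_const (fderiv ℝ (gradient E) θ₀ (gradient E θ₀)))
      rw [zero_sub] at this
      exact this
    exact ((hφ' x hx).sub hc).hasDerivWithinAt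
  have hkey : ∀ x ∈ Ico (0:ℝ) h,
      ‖P x - (-(gradient E θ₀)
          - ((h - 2*x)/2) • fderiv ℝ (gradient E) θ₀ (gradient E θ₀))‖
        ≤ (M₃*M*M + M₂*(M₂*M + M₂*M₁) + M₃*M*M₁) * (h*h) := by
    intro x hx
    have hxI : x ∈ Icc (0:ℝ) h := Ico_subset_Icc_self hx
    have hid : P x - (-(gradient E θ₀)
          - ((h - 2*x)/2) • fderiv ℝ (gradient E) θ₀ (gradient E θ₀))
        = -(gradient E (φ x) - gradient E θ₀ - fderiv ℝ (gradient E) θ₀ (φ x - θ₀))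
          - fderiv ℝ (gradient E) θ₀ (φ x - θ₀ + x • gradient E θ₀)
          - (h/2) • (fderiv ℝ (gradient E) (φ x) (gradient E θ₀)
              - fderiv ℝ (gradient E) θ₀ (gradient E θ₀)) := by
      rw [hPdef]
      simp only [map_sub, map_add, map_smul]
      module
    have t1 := hTaylor x hxI
    have t2 : ‖fderiv ℝ (gradient E) θ₀ (φ x - θ₀ + x • gradient E θ₀)‖
        ≤ M₂ * ((M₂*M + M₂*M₁) * h * h) := by
      refine le_trans ((fderiv ℝ (gradient E) θ₀).le_opNorm _) ?_
      exact mul_le_mul (hbA θ₀ hθ₀mem) (hρbound x hxI) (norm_nonneg _)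
        ((norm_nonneg _).trans (hbA θ₀ hθ₀mem))
    have t3 : ‖(h/2) • (fderiv ℝ (gradient E) (φ x) (gradient E θ₀)
        - fderiv ℝ (gradient E) θ₀ (gradient E θ₀))‖ ≤ (h/2) * ((M₃*(M*h)) * M₁) := by
      rw [norm_smul, Real.norm_eq_abs, abs_of_nonneg (by linarith)]
      refine mul_le_mul_of_nonneg_left ?_ (by linarith)
      have heq : fderiv ℝ (gradient E) (φ x) (gradient E θ₀)
          - fderiv ℝ (gradient E) θ₀ (gradient E θ₀)
          = (fderiv ℝ (gradient E) (φ x) - fderiv ℝ (gradient E) θ₀) (gradient E θ₀) := by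
        simp [ContinuousLinearMap.sub_apply]
      rw [heq]
      refine le_trans ((fderiv ℝ (gradient E) (φ x) - fderiv ℝ (gradient E) θ₀).le_opNorm _) ?_
      have hlipx : ‖fderiv ℝ (gradient E) (φ x) - fderiv ℝ (gradient E) θ₀‖ ≤ M₃*(M*h) :=
        le_trans (hAlip (φ x) (hmem x hxI) θ₀ hθ₀mem)
          (mul_le_mul_of_nonneg_left (hMh' x hxI) (by linarith))
      exact mul_le_mul hlipx hv₀ (norm_nonneg _) ((norm_nonneg _).trans hlipx)
    rw [hid]
    calc ‖_ - _ - _‖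
        ≤ ‖-(gradient E (φ x) - gradient E θ₀ - fderiv ℝ (gradient E) θ₀ (φ x - θ₀))
            - fderiv ℝ (gradient E) θ₀ (φ x - θ₀ + x • gradient E θ₀)‖
          + ‖(h/2) • (fderiv ℝ (gradient E) (φ x) (gradient E θ₀)
              - fderiv ℝ (gradient E) θ₀ (gradient E θ₀))‖ := norm_sub_le _ _
      _ ≤ ‖-(gradient E (φ x) - gradient E θ₀ - fderiv ℝ (gradient E) θ₀ (φ x - θ₀))‖
          + ‖fderiv ℝ (gradient E) θ₀ (φ x - θ₀ + x • gradient E θ₀)‖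
          + ‖(h/2) • (fderiv ℝ (gradient E) (φ x) (gradient E θ₀)
              - fderiv ℝ (gradient E) θ₀ (gradient E θ₀))‖ := by
            gcongr
            exact norm_sub_le _ _
      _ ≤ (M₃*(M*h)) * (M*h) + M₂ * ((M₂*M + M₂*M₁) * h * h) + (h/2) * ((M₃*(M*h)) * M₁) := by
            rw [norm_neg]
            exact add_le_add (add_le_add t1 t2) t3
      _ ≤ (M₃*M*M + M₂*(M₂*M + M₂*M₁) + M₃*M*M₁) * (h*h) := by
            nlinarith [mul_nonneg (mul_nonneg (mul_nonneg hM₃pos.le hMpos.le) hM₁pos.le)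
              (mul_nonneg hh0.le hh0.le)]
  have hmvt := norm_image_sub_le_of_norm_deriv_le_segment' hψderiv hkey h
    (right_mem_Icc.2 hh0.le)
  have hψ0 : φ (0:ℝ) - (θ₀ - (0:ℝ) • gradient E θ₀
      - (((0:ℝ)*(h-0))/2) • fderiv ℝ (gradient E) θ₀ (gradient E θ₀)) = 0 := by
    rw [hφ0]; simp
  have hψh : φ h - (θ₀ - h • gradient E θ₀
      - ((h*(h-h))/2) • fderiv ℝ (gradient E) θ₀ (gradient E θ₀))
      = φ h - (θ₀ - h • gradient E θ₀) := by
    simp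
  rw [hψ0, hψh, sub_zero, sub_zero] at hmvt
  calc ‖φ h - (θ₀ - h • gradient E θ₀)‖
      ≤ (M₃*M*M + M₂*(M₂*M + M₂*M₁) + M₃*M*M₁) * (h*h) * h := hmvt
    _ = (M₃*M*M + M₂*(M₂*M + M₂*M₁) + M₃*M*M₁) * h ^ 3 := by ring
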